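/- arXiv:hep-th/0508208 — 3 statements merged into one kernel-verified Lean document; each statement's English description precedes it below -/
import Mathlib

section
/- Let G₁, G₂ : ℝ² → Matrix n n ℝ be differentiable matrix-valued functions on an open connected set U, invertible at every point of U, satisfying G₁⁻¹ · ∂ᵣG₁ = G₂⁻¹ · ∂ᵣG₂ and G₁⁻¹ · ∂_zG₁ = G₂⁻¹ · ∂_zG₂ on U. Then M = G₂ · G₁⁻¹ is constant on U. -/
open Matrix

attribute [local instance] Matrix.normedAddCommGroup Matrix.normedSpace

section Aux
variable {n : Type*} [Fintype n] [DecidableEq n]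

noncomputable def entryCLM (i j : n) : Matrix n n ℝ →L[ℝ] ℝ :=
  LinearMap.toContinuousLinearMap
    ((LinearMap.proj j).comp (LinearMap.proj (R := ℝ) (φ := fun _ : n => n → ℝ) i))

lemma entryCLM_apply (i j : n) (A : Matrix n n ℝ) : entryCLM i j A = A i j := rfl

noncomputable def mulL : Matrix n n ℝ →L[ℝ] Matrix n n ℝ →L[ℝ] Matrix n n ℝ :=
  LinearMap.toContinuousLinearMap <|
    (LinearMap.toContinuousLinearMap :
        (Matrix n n ℝ →ₗ[ℝ] Matrix n n ℝ) ≃ₗ[ℝ] (Matrix n n ℝ →L[ℝ] Matrix n n ℝ)).toLinearMap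
      ∘ₗ LinearMap.mul ℝ (Matrix n n ℝ)

lemma mulL_apply (A B : Matrix n n ℝ) : mulL A B = A * B := by
  simp [mulL]

lemma diff_entry_prod (σ : Equiv.Perm n) (s : Finset n) :
    Differentiable ℝ (fun A : Matrix n n ℝ => ∏ i ∈ s, A (σ i) i) := by
  classical
  induction s using Finset.induction with
  | empty => simpa using differentiable_const (1 : ℝ)
  | insert _ _ h ih =>
    simp only [Finset.prod_insert h]
    exact (entryCLM _ _).differentiable.mul ih

lemma hdet : Differentiable ℝ (fun A : Matrix n n ℝ => A.det) := by
  simp only [Matrix.det_apply]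
  refine Differentiable.fun_sum fun σ _ => ?_
  simp only [Units.smul_def, zsmul_eq_mul]
  exact (differentiable_const _).mul (diff_entry_prod σ Finset.univ)

end Aux

section Aux2
variable {n : Type*} [Fintype n] [DecidableEq n]

lemma diff_updateRow (j : n) (c : n → ℝ) :
    Differentiable ℝ (fun A : Matrix n n ℝ => A.updateRow j c) := by
  refine differentiable_pi.mpr fun a => differentiable_pi.mpr fun b => ?_
  simp only [Matrix.updateRow_apply]
  by_cases h : a = j
  · simp [h]
  · simp only [h, if_false]
    exact (entryCLM a b).differentiable

lemma hadj : Differentiable ℝ (fun A : Matrix n n ℝ => A.adjugate) := by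
  refine differentiable_pi.mpr fun i => differentiable_pi.mpr fun j => ?_
  simp only [Matrix.adjugate_apply]
  exact hdet.comp (diff_updateRow j (Pi.single i 1))

lemma diff_inv_at {f : ℝ × ℝ → Matrix n n ℝ} {p : ℝ × ℝ}
    (hf : DifferentiableAt ℝ f p) (h : IsUnit (f p)) :
    DifferentiableAt ℝ (fun q => (f q)⁻¹) p := by
  have hdet0 : (f p).det ≠ 0 := by
    have := (Matrix.isUnit_iff_isUnit_det _).mp h
    exact isUnit_iff_ne_zero.mp this
  have heq : (fun q => (f q)⁻¹) = fun q => (Ring.inverse (f q).det) • (f q).adjugate :=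
    funext fun q => Matrix.inv_def _
  rw [heq]
  simp only [Ring.inverse_eq_inv']
  exact ((hdet.differentiableAt.comp p hf).inv (z := p) hdet0).smul (hadj.differentiableAt.comp p hf)

lemma hasFDerivAt_matmul {f g : ℝ × ℝ → Matrix n n ℝ} {f' g' : ℝ × ℝ →L[ℝ] Matrix n n ℝ}
    {p : ℝ × ℝ} (hf : HasFDerivAt f f' p) (hg : HasFDerivAt g g' p) :
    HasFDerivAt (fun q => f q * g q)
      ((show ℝ × ℝ →L[ℝ] Matrix n n ℝ from (mulL (f p)).comp g') + (show ℝ × ℝ →L[ℝ] Matrix n n ℝ from ((mulL (n := n)).flip (g p)).comp f')) p := by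
  have h := ((mulL (n := n)).isBoundedBilinearMap.hasFDerivAt (f p, g p)).comp p (hf.prodMk hg)
  have he : ((fun x : Matrix n n ℝ × Matrix n n ℝ => mulL x.1 x.2) ∘ fun x => (f x, g x))
      = fun q => f q * g q := funext fun q => mulL_apply _ _
  erw [he] at h
  refine h.congr_fderiv ?_
  ext v <;> rfl

end Aux2

theorem constant_ratio_of_equal_log_derivatives
    {n : Type*} [Fintype n] [DecidableEq n]
    (U : Set (ℝ × ℝ)) (hU : IsOpen U) (hUconn : IsConnected U)
    (G₁ G₂ : ℝ × ℝ → Matrix n n ℝ)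
    (hG₁ : DifferentiableOn ℝ G₁ U) (hG₂ : DifferentiableOn ℝ G₂ U)
    (hinv₁ : ∀ p ∈ U, IsUnit (G₁ p)) (hinv₂ : ∀ p ∈ U, IsUnit (G₂ p))
    (hr : ∀ p ∈ U, (G₁ p)⁻¹ * fderiv ℝ G₁ p (1, 0) = (G₂ p)⁻¹ * fderiv ℝ G₂ p (1, 0))
    (hz : ∀ p ∈ U, (G₁ p)⁻¹ * fderiv ℝ G₁ p (0, 1) = (G₂ p)⁻¹ * fderiv ℝ G₂ p (0, 1)) :
    ∀ p ∈ U, ∀ q ∈ U, G₂ p * (G₁ p)⁻¹ = G₂ q * (G₁ q)⁻¹ := by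
  classical
  set M : ℝ × ℝ → Matrix n n ℝ := fun q => G₂ q * (G₁ q)⁻¹ with hMdef
  have hG₁at : ∀ p ∈ U, DifferentiableAt ℝ G₁ p :=
    fun p hp => (hG₁ p hp).differentiableAt (hU.mem_nhds hp)
  have hG₂at : ∀ p ∈ U, DifferentiableAt ℝ G₂ p :=
    fun p hp => (hG₂ p hp).differentiableAt (hU.mem_nhds hp)
  have hMderiv : ∀ p ∈ U, HasFDerivAt M (0 : (ℝ × ℝ) →L[ℝ] Matrix n n ℝ) p := by
    intro p hp
    have h1 := hG₁at p hp
    have h2 := hG₂at p hp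
    have hIdiff : DifferentiableAt ℝ (fun q => (G₁ q)⁻¹) p := diff_inv_at h1 (hinv₁ p hp)
    set I₁ : Matrix n n ℝ := (G₁ p)⁻¹ with hI₁
    set I₂ : Matrix n n ℝ := (G₂ p)⁻¹ with hI₂
    have hdet₁ : IsUnit (G₁ p).det := (Matrix.isUnit_iff_isUnit_det _).mp (hinv₁ p hp)
    have hdet₂ : IsUnit (G₂ p).det := (Matrix.isUnit_iff_isUnit_det _).mp (hinv₂ p hp)
    have hGI : G₁ p * I₁ = 1 := Matrix.mul_nonsing_inv _ hdet₁
    have hIG : I₁ * G₁ p = 1 := Matrix.nonsing_inv_mul _ hdet₁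
    have hGI₂ : G₂ p * I₂ = 1 := Matrix.mul_nonsing_inv _ hdet₂
    set D₁ := fderiv ℝ G₁ p with hD₁def
    set D₂ := fderiv ℝ G₂ p with hD₂def
    set DI := fderiv ℝ (fun q => (G₁ q)⁻¹) p with hDIdef
    have hD₁ : HasFDerivAt G₁ D₁ p := h1.hasFDerivAt
    have hD₂ : HasFDerivAt G₂ D₂ p := h2.hasFDerivAt
    have hDI : HasFDerivAt (fun q => (G₁ q)⁻¹) DI p := hIdiff.hasFDerivAt
    -- derivative of G₁ * G₁⁻¹ = 1 is zero
    have hone : HasFDerivAt (fun q => G₁ q * (G₁ q)⁻¹) (0 : (ℝ × ℝ) →L[ℝ] Matrix n n ℝ) p := by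
      have heq : (fun _ : ℝ × ℝ => (1 : Matrix n n ℝ)) =ᶠ[nhds p]
          (fun q => G₁ q * (G₁ q)⁻¹) := by
        filter_upwards [hU.mem_nhds hp] with q hq
        exact (Matrix.mul_nonsing_inv _ ((Matrix.isUnit_iff_isUnit_det _).mp (hinv₁ q hq))).symm
      exact (hasFDerivAt_const (1 : Matrix n n ℝ) p).congr_of_eventuallyEq heq.symm
    have hzero := (hasFDerivAt_matmul hD₁ hDI).unique hone
    have hDIv : ∀ v, DI v = -(I₁ * D₁ v * I₁) := by
      intro v
      have h0 : G₁ p * DI v + D₁ v * I₁ = 0 := by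
        have := congrArg (fun (L : ℝ × ℝ →L[ℝ] Matrix n n ℝ) => L v) hzero
        exact this
      have h1' : G₁ p * DI v = -(D₁ v * I₁) := eq_neg_of_add_eq_zero_left h0
      have := congrArg (fun X => I₁ * X) h1'
      simpa [← Matrix.mul_assoc, hIG, Matrix.one_mul, Matrix.mul_neg] using this
    -- key relation for all directions
    have hkey : ∀ v : ℝ × ℝ, I₁ * D₁ v = I₂ * D₂ v := by
      intro v
      have hv : v = v.1 • ((1 : ℝ), (0 : ℝ)) + v.2 • ((0 : ℝ), (1 : ℝ)) := by
        ext <;> simp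
      rw [hv, map_add, map_add, _root_.map_smul, _root_.map_smul, _root_.map_smul, _root_.map_smul]
      rw [Matrix.mul_add, Matrix.mul_add, Matrix.mul_smul, Matrix.mul_smul,
        Matrix.mul_smul, Matrix.mul_smul]
      rw [hr p hp, hz p hp]
    have hMd := hasFDerivAt_matmul hD₂ hDI
    have hfinal : (show ℝ × ℝ →L[ℝ] Matrix n n ℝ from (mulL (G₂ p)).comp DI) + (show ℝ × ℝ →L[ℝ] Matrix n n ℝ from ((mulL (n := n)).flip I₁).comp D₂) = 0 := by
      refine ContinuousLinearMap.ext fun v => ?_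
      simp only [ContinuousLinearMap.add_apply, ContinuousLinearMap.comp_apply,
        ContinuousLinearMap.flip_apply, ContinuousLinearMap.zero_apply, mulL_apply]
      change G₂ p * DI v + D₂ v * I₁ = 0
      have e1 : G₂ p * DI v = -(D₂ v * I₁) := by
        rw [hDIv v, Matrix.mul_neg]
        rw [hkey v]
        rw [← Matrix.mul_assoc, ← Matrix.mul_assoc, hGI₂, Matrix.one_mul]
      rw [e1]; abel
    rw [hfinal] at hMd
    exact hMd
  -- local constancy
  have hlocal : ∀ p ∈ U, ∃ ε > 0, Metric.ball p ε ⊆ U ∧ ∀ q ∈ Metric.ball p ε, M q = M p := by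
    intro p hp
    obtain ⟨ε, hε, hball⟩ := Metric.isOpen_iff.mp hU p hp
    refine ⟨ε, hε, hball, fun q hq => ?_⟩
    have hdiff : DifferentiableOn ℝ M (Metric.ball p ε) :=
      fun x hx => ((hMderiv x (hball hx)).differentiableAt).differentiableWithinAt
    have hfz : ∀ x ∈ Metric.ball p ε, fderivWithin ℝ M (Metric.ball p ε) x = 0 := by
      intro x hx
      rw [fderivWithin_of_isOpen Metric.isOpen_ball hx]
      exact (hMderiv x (hball hx)).fderiv
    exact (convex_ball p ε).is_const_of_fderivWithin_eq_zero hdiff hfz hq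
      (Metric.mem_ball_self hε)
  -- clopen argument
  intro p hp q hq
  by_contra hne
  have hS : IsOpen {x | x ∈ U ∧ M x = M p} := by
    refine Metric.isOpen_iff.mpr fun x ⟨hxU, hxM⟩ => ?_
    obtain ⟨ε, hε, hball, hconst⟩ := hlocal x hxU
    exact ⟨ε, hε, fun y hy => ⟨hball hy, (hconst y hy).trans hxM⟩⟩
  have hT : IsOpen {x | x ∈ U ∧ M x ≠ M p} := by
    refine Metric.isOpen_iff.mpr fun x ⟨hxU, hxM⟩ => ?_
    obtain ⟨ε, hε, hball, hconst⟩ := hlocal x hxU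
    exact ⟨ε, hε, fun y hy => ⟨hball hy, by rw [hconst y hy]; exact hxM⟩⟩
  obtain ⟨x, hxU, ⟨-, hx1⟩, -, hx2⟩ := hUconn.isPreconnected _ _ hS hT
    (fun x hx => by by_cases h : M x = M p; exacts [Or.inl ⟨hx, h⟩, Or.inr ⟨hx, h⟩])
    ⟨p, hp, hp, rfl⟩ ⟨q, hq, hq, fun h => hne h.symm⟩
  exact hx2 hx1
end

section
/- Let ρ : ℝ → Matrix n n ℝ be differentiable with ρ' = [ρ, Λ] for some continuous Λ. If ρ(z₀)² = ρ(z₀) for some z₀ and Λ is continuous, then D(z) = ρ(z)² − ρ(z) satisfies D' = [D, Λ], hence by uniqueness of solutions to linear ODEs, ρ(z)² = ρ(z) for all z. -/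
open Matrix

attribute [local instance] Matrix.normedAddCommGroup Matrix.normedSpace

section aux

variable {n : Type*} [Fintype n] [DecidableEq n]
set_option linter.unusedSectionVars false

lemma my_norm_mul_le (A B : Matrix n n ℝ) :
    ‖A * B‖ ≤ (Fintype.card n : ℝ) * ‖A‖ * ‖B‖ := by
  rw [Matrix.norm_le_iff (by positivity)]
  intro i j
  calc ‖(A * B) i j‖ = ‖∑ k, A i k * B k j‖ := by rw [Matrix.mul_apply]
    _ ≤ ∑ k, ‖A i k * B k j‖ := norm_sum_le _ _
    _ ≤ ∑ _k : n, ‖A‖ * ‖B‖ := by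
        refine Finset.sum_le_sum fun k _ => ?_
        rw [norm_mul]
        exact mul_le_mul (A.norm_entry_le_entrywise_sup_norm)
          (B.norm_entry_le_entrywise_sup_norm) (norm_nonneg _) (norm_nonneg _)
    _ = (Fintype.card n : ℝ) * ‖A‖ * ‖B‖ := by
        rw [Finset.sum_const, Finset.card_univ, nsmul_eq_mul, mul_assoc]

noncomputable def mulCLM : Matrix n n ℝ →L[ℝ] Matrix n n ℝ →L[ℝ] Matrix n n ℝ :=
  LinearMap.mkContinuous₂ (LinearMap.mul ℝ (Matrix n n ℝ)) (Fintype.card n)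
    fun A B => my_norm_mul_le A B

@[simp] lemma mulCLM_apply (A B : Matrix n n ℝ) : mulCLM A B = A * B := rfl

lemma hasDerivAt_matrix_mul {f g : ℝ → Matrix n n ℝ} {f' g' : Matrix n n ℝ} {x : ℝ}
    (hf : HasDerivAt f f' x) (hg : HasDerivAt g g' x) :
    HasDerivAt (fun t => f t * g t) (f' * g x + f x * g') x := by
  letI : NormedRing (Matrix n n ℝ) := Matrix.linftyOpNormedRing
  letI : NormedAlgebra ℝ (Matrix n n ℝ) := Matrix.linftyOpNormedAlgebra
  exact hf.fun_mul hg

end aux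

theorem idempotency_propagates_along_commutator_ode
    {n : Type*} [Fintype n] [DecidableEq n]
    (ρ Λ : ℝ → Matrix n n ℝ)
    (hΛ : Continuous Λ)
    (hode : ∀ z, HasDerivAt ρ (ρ z * Λ z - Λ z * ρ z) z)
    (z₀ : ℝ) (hz₀ : ρ z₀ * ρ z₀ = ρ z₀) :
    (∀ z, HasDerivAt (fun z => ρ z * ρ z - ρ z)
        ((ρ z * ρ z - ρ z) * Λ z - Λ z * (ρ z * ρ z - ρ z)) z) ∧
    (∀ z, ρ z * ρ z = ρ z) := by
  have hD : ∀ z, HasDerivAt (fun z => ρ z * ρ z - ρ z)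
      ((ρ z * ρ z - ρ z) * Λ z - Λ z * (ρ z * ρ z - ρ z)) z := by
    intro z
    have h1 := (hasDerivAt_matrix_mul (hode z) (hode z)).sub (hode z)
    convert h1 using 1
    · rfl
    · rfl
    · rfl
    · rfl
    noncomm_ring
  refine ⟨hD, fun z => ?_⟩
  -- set up interval
  set a : ℝ := min z z₀ - 1 with ha
  set b : ℝ := max z z₀ + 1 with hb
  have hab : a < b := by
    have := min_le_max (a := z) (b := z₀); simp only [ha, hb]; linarith
  have hz₀mem : z₀ ∈ Set.Ioo a b := by
    constructor
    · have : min z z₀ ≤ z₀ := min_le_right _ _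
      simp only [ha]; linarith
    · have : z₀ ≤ max z z₀ := le_max_right _ _
      simp only [hb]; linarith
  have hzmem : z ∈ Set.Icc a b := by
    constructor
    · have : min z z₀ ≤ z := min_le_left _ _
      simp only [ha]; linarith
    · have : z ≤ max z z₀ := le_max_left _ _
      simp only [hb]; linarith
  -- truncated Λ
  set π : ℝ → ℝ := fun t => max a (min t b) with hπ
  have hπmem : ∀ t, π t ∈ Set.Icc a b := fun t =>
    ⟨le_max_left _ _, max_le hab.le (min_le_right _ _)⟩
  have hπeq : ∀ t ∈ Set.Ioo a b, π t = t := by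
    intro t ht
    simp only [hπ]
    rw [min_eq_left ht.2.le, max_eq_right ht.1.le]
  have hπcont : Continuous π := continuous_const.max (continuous_id.min continuous_const)
  set Λ' : ℝ → Matrix n n ℝ := fun t => Λ (π t) with hΛ'
  obtain ⟨C, hC⟩ := (isCompact_Icc (a := a) (b := b)).exists_bound_of_continuousOn
    hΛ.continuousOn
  have hΛ'bound : ∀ t, ‖Λ' t‖ ≤ C := fun t => hC _ (hπmem t)
  have hC0 : 0 ≤ C := le_trans (norm_nonneg _) (hΛ'bound 0)
  -- the vector field
  set v : ℝ → Matrix n n ℝ → Matrix n n ℝ := fun t M => M * Λ' t - Λ' t * M with hv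
  set K : NNReal := Real.toNNReal (2 * (Fintype.card n : ℝ) * C) with hK
  have hlip : ∀ t, LipschitzWith K (v t) := by
    intro t
    apply LipschitzWith.of_dist_le_mul
    intro M N
    have key : v t M - v t N = (M - N) * Λ' t - Λ' t * (M - N) := by
      simp only [hv]; noncomm_ring
    rw [dist_eq_norm, dist_eq_norm, key]
    calc ‖(M - N) * Λ' t - Λ' t * (M - N)‖
        ≤ ‖(M - N) * Λ' t‖ + ‖Λ' t * (M - N)‖ := norm_sub_le _ _
      _ ≤ (Fintype.card n : ℝ) * ‖M - N‖ * ‖Λ' t‖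
          + (Fintype.card n : ℝ) * ‖Λ' t‖ * ‖M - N‖ := by
          exact add_le_add (my_norm_mul_le _ _) (my_norm_mul_le _ _)
      _ ≤ (Fintype.card n : ℝ) * ‖M - N‖ * C + (Fintype.card n : ℝ) * C * ‖M - N‖ := by
          gcongr
          · exact hΛ'bound t
          · exact hΛ'bound t
      _ = (2 * (Fintype.card n : ℝ) * C) * ‖M - N‖ := by ring
      _ ≤ (K : ℝ) * ‖M - N‖ := by
          gcongr
          exact Real.le_coe_toNNReal _
  -- apply uniqueness
  have key := ODE_solution_unique_of_mem_Icc (v := v) (s := fun _ => Set.univ) (K := K)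
    (f := fun t => ρ t * ρ t - ρ t) (g := fun _ => (0 : Matrix n n ℝ))
    (fun t _ => (hlip t).lipschitzOnWith)
    hz₀mem
    (fun t _ => (hD t).continuousAt.continuousWithinAt)
    (fun t ht => by
      have := hD t
      rw [show v t (ρ t * ρ t - ρ t) = (ρ t * ρ t - ρ t) * Λ t - Λ t * (ρ t * ρ t - ρ t) by
        simp only [hv, hΛ', hπeq t ht]]
      exact this)
    (fun _ _ => trivial)
    (continuousOn_const)
    (fun t _ => by
      have : v t 0 = 0 := by simp [hv]
      rw [this]
      exact hasDerivAt_const t 0)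
    (fun _ _ => trivial)
    (by simp [hz₀])
  have := key hzmem
  simp only at this
  have h0 : ρ z * ρ z - ρ z = 0 := this
  exact sub_eq_zero.mp h0
end

section
/- Let h(z) = −2sc(1 − (z/α)c)/(α((1 − (z/α)c)² + s²)²) with s = sin λ, c = cos λ, α > 0, and define ρ(z) = [[0,0],[h(z),1]] and Λ(z) = [[−μ(z), 0],[h'(z) + 2h(z)μ(z), μ(z)]] where μ(z) = 2((1 − (z/α)c)² − s²)/(αc(1 − z²/α²)((1 − (z/α)c)² + s²)). Then for all z < −α: Tr ρ(z) = 1, ρ(z)² = ρ(z), Tr Λ(z) = 0, and ρ'(z) = [ρ(z), Λ(z)]. -/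
open Matrix Real

attribute [local instance] Matrix.normedAddCommGroup Matrix.normedSpace

/-!
`ρ = !![0, 0; h, 1]` is an idempotent of trace one for every value of `h`, and for every `μ`
the commutator `[ρ, Λ]` equals `!![0, 0; h', 0]`, the entrywise derivative of `ρ`. The only
analytic input is that `h` is differentiable, since its denominator is bounded below by a
positive multiple of `sin⁴ λ`.
-/

section TwoByTwo

variable {R : Type*} [CommRing R]

theorem trace_fin_two_zero_zero_one (a : R) : trace !![0, 0; a, 1] = 1 := by
  simp [trace_fin_two_of]

theorem mul_self_fin_two_zero_zero_one (a : R) :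
    !![0, 0; a, 1] * !![0, 0; a, 1] = !![(0 : R), 0; a, 1] := by
  rw [mul_fin_two]
  simp

theorem trace_fin_two_neg_zero_self (m b : R) : trace !![-m, 0; b, m] = 0 := by
  simp [trace_fin_two_of]

theorem commutator_fin_two_zero_zero_one (a m d : R) :
    !![0, 0; a, 1] * !![-m, 0; d + 2 * a * m, m] - !![-m, 0; d + 2 * a * m, m] * !![0, 0; a, 1]
      = !![0, 0; d, 0] := by
  ext i j
  fin_cases i <;> fin_cases j <;> simp
  ring

end TwoByTwo

theorem hasDerivAt_fin_two_of {𝕜 : Type*} [NontriviallyNormedField 𝕜]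
    {f₁₁ f₁₂ f₂₁ f₂₂ : 𝕜 → 𝕜} {f₁₁' f₁₂' f₂₁' f₂₂' x : 𝕜}
    (h₁₁ : HasDerivAt f₁₁ f₁₁' x) (h₁₂ : HasDerivAt f₁₂ f₁₂' x)
    (h₂₁ : HasDerivAt f₂₁ f₂₁' x) (h₂₂ : HasDerivAt f₂₂ f₂₂' x) :
    HasDerivAt (fun y => !![f₁₁ y, f₁₂ y; f₂₁ y, f₂₂ y]) !![f₁₁', f₁₂'; f₂₁', f₂₂'] x := by
  refine hasDerivAt_pi.2 fun i => hasDerivAt_pi.2 fun j => ?_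
  fin_cases i <;> fin_cases j <;> assumption

theorem differentiable_div_sq_add_sq_sq {α s c k : ℝ} (hα : α ≠ 0) (hs : s ≠ 0) :
    Differentiable ℝ fun z => k * (1 - (z / α) * c) / (α * ((1 - (z / α) * c) ^ 2 + s ^ 2) ^ 2) :=
  fun z => by
    have : 0 < (1 - (z / α) * c) ^ 2 + s ^ 2 := by positivity
    exact DifferentiableAt.div (by fun_prop) (by fun_prop) (by positivity)

theorem kerr_sources_on_left_semiinfinite_rod_general
    (α lam : ℝ) (hα : 0 < α) (hlam : lam ∈ Set.Ioo 0 (Real.pi / 2))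
    (h μ : ℝ → ℝ)
    (hh : h = fun z => -2 * Real.sin lam * Real.cos lam * (1 - (z / α) * Real.cos lam) /
        (α * ((1 - (z / α) * Real.cos lam) ^ 2 + Real.sin lam ^ 2) ^ 2))
    (ρ Λ : ℝ → Matrix (Fin 2) (Fin 2) ℝ)
    (hρ : ρ = fun z => !![0, 0; h z, 1])
    (hΛ : Λ = fun z => !![-μ z, 0; deriv h z + 2 * h z * μ z, μ z]) :
    ∀ z : ℝ, z < -α →
      Matrix.trace (ρ z) = 1 ∧
      ρ z * ρ z = ρ z ∧
      Matrix.trace (Λ z) = 0 ∧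
      HasDerivAt ρ (ρ z * Λ z - Λ z * ρ z) z := by
  intro z _
  have hs : Real.sin lam ≠ 0 :=
    (Real.sin_pos_of_pos_of_lt_pi hlam.1 (by linarith [hlam.2, Real.pi_pos])).ne'
  have hdiff : Differentiable ℝ h := hh ▸ differentiable_div_sq_add_sq_sq hα.ne' hs
  subst hρ hΛ
  refine ⟨trace_fin_two_zero_zero_one _, mul_self_fin_two_zero_zero_one _,
    trace_fin_two_neg_zero_self _ _, ?_⟩
  rw [commutator_fin_two_zero_zero_one]
  exact hasDerivAt_fin_two_of (hasDerivAt_const _ _) (hasDerivAt_const _ _)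
    (hdiff z).hasDerivAt (hasDerivAt_const _ _)

theorem kerr_sources_on_left_semiinfinite_rod
    (α lam : ℝ) (hα : 0 < α) (hlam : lam ∈ Set.Ioo 0 (Real.pi / 2))
    (h μ : ℝ → ℝ)
    (hh : h = fun z => -2 * Real.sin lam * Real.cos lam * (1 - (z / α) * Real.cos lam) /
        (α * ((1 - (z / α) * Real.cos lam) ^ 2 + Real.sin lam ^ 2) ^ 2))
    (hμ : μ = fun z => 2 * ((1 - (z / α) * Real.cos lam) ^ 2 - Real.sin lam ^ 2) /
        (α * Real.cos lam * (1 - z ^ 2 / α ^ 2) *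
          ((1 - (z / α) * Real.cos lam) ^ 2 + Real.sin lam ^ 2)))
    (ρ Λ : ℝ → Matrix (Fin 2) (Fin 2) ℝ)
    (hρ : ρ = fun z => !![0, 0; h z, 1])
    (hΛ : Λ = fun z => !![-μ z, 0; deriv h z + 2 * h z * μ z, μ z]) :
    ∀ z : ℝ, z < -α →
      Matrix.trace (ρ z) = 1 ∧
      ρ z * ρ z = ρ z ∧
      Matrix.trace (Λ z) = 0 ∧
      HasDerivAt ρ (ρ z * Λ z - Λ z * ρ z) z :=
  kerr_sources_on_left_semiinfinite_rod_general α lam hα hlam h μ hh ρ Λ hρ hΛ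
end
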